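/- Assume additionally that M = AᵀΣ_obs⁻¹A is invertible, and let λ ∈ ℝ^d have positive entries. For w ∈ ℝ^d with strictly positive entries define F(w) = −Σ_{i=1}^d λ_i w_i − (1/2)·log det(Λ_w^{1/2} M Λ_w^{1/2} + I) + (1/2)·yᵀΣ_obs⁻¹A Λ_w^{1/2}(Λ_w^{1/2} M Λ_w^{1/2} + I)⁻¹ Λ_w^{1/2} AᵀΣ_obs⁻¹y. Then for every such w and all indices i, j, the second partial derivative ∂²F/∂w_i∂w_j at w exists and equals (1/2)·([(M⁻¹ + Λ_w)⁻¹]_{ij})² − z_i·[(M⁻¹ + Λ_w)⁻¹]_{ij}·z_j, where z = (M⁻¹ + Λ_w)⁻¹ M⁻¹ AᵀΣ_obs⁻¹y; equivalently, the Hessian of F at w is (1/2)·((M⁻¹+Λ_w)⁻¹)^{⊙2} − Λ_z (M⁻¹+Λ_w)⁻¹ Λ_z, where ⊙2 denotes the entrywise square and Λ_z the diagonal matrix with z on its diagonal. (Hessian formula, appendix C.1, of the log posterior mixing density.) -/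

import Mathlib

open Matrix MeasureTheory Real

/-- The log unnormalized posterior mixing density for the Laplace prior:
`F(w) = −∑ᵢ λᵢwᵢ − ½ log det(Λ_w^{1/2} M Λ_w^{1/2} + I)
        + ½ yᵀΣ_obs⁻¹A Λ_w^{1/2}(Λ_w^{1/2} M Λ_w^{1/2} + I)⁻¹Λ_w^{1/2} AᵀΣ_obs⁻¹ y`,
where `M = AᵀΣ_obs⁻¹A`, `Λ_w = diag(w)` and `Λ_w^{1/2} = diag(√w)`. -/
noncomputable def logMixPosterior {d m : ℕ}
    (A : Matrix (Fin m) (Fin d) ℝ) (Sobs : Matrix (Fin m) (Fin m) ℝ)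
    (lam : Fin d → ℝ) (y : Fin m → ℝ) (w : Fin d → ℝ) : ℝ :=
  -(∑ i, lam i * w i)
    - (1 / 2) * Real.log ((Matrix.diagonal (fun i => Real.sqrt (w i))
        * (Aᵀ * Sobs⁻¹ * A) * Matrix.diagonal (fun i => Real.sqrt (w i)) + 1).det)
    + (1 / 2) * (y ⬝ᵥ (Sobs⁻¹ * A * Matrix.diagonal (fun i => Real.sqrt (w i))
        * (Matrix.diagonal (fun i => Real.sqrt (w i)) * (Aᵀ * Sobs⁻¹ * A)
            * Matrix.diagonal (fun i => Real.sqrt (w i)) + 1)⁻¹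
        * Matrix.diagonal (fun i => Real.sqrt (w i)) * Aᵀ * Sobs⁻¹).mulVec y)

/-!
With `M = AᵀΣ_obs⁻¹A` and `N_w = M⁻¹ + Λ_w`, the Weinstein–Aronszajn identity gives
`det(Λ_w^{1/2} M Λ_w^{1/2} + I) = det M · det N_w` and the Woodbury identity gives
`Λ_w^{1/2}(Λ_w^{1/2} M Λ_w^{1/2} + I)⁻¹Λ_w^{1/2} = M⁻¹ − M⁻¹N_w⁻¹M⁻¹`, so on the closed orthant
`F(w) = const − λ·w − ½ log det N_w − ½ cᵀN_w⁻¹c` with `c = M⁻¹AᵀΣ_obs⁻¹y`: the square roots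
disappear. Moving `w_k` moves `N_w` along the rank-one matrix `E_kk`, along which `det` is affine
with slope `adj(N_w)_kk` and the inverse has derivative `−N_w⁻¹E_kkN_w⁻¹`. Hence
`∂_j F = −λ_j − ½[N_w⁻¹]_jj + ½ z_j²` with `z = N_w⁻¹c`, and differentiating once more in `w_i`,
using the symmetry of `N_w⁻¹`, gives the Hessian.
-/

namespace Matrix

section CommRing

variable {n : Type*} [DecidableEq n] {R : Type*} [CommRing R]

theorem add_diagonal_update (K : Matrix n n R) (v : n → R) (k : n) (s : R) :
    K + diagonal (Function.update v k s) = K + diagonal v + (s - v k) • single k k 1 := by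
  have hv : Function.update v k s = v + Pi.single k (s - v k) := by
    ext a; rcases eq_or_ne a k with rfl | hak <;> simp [*]
  rw [hv, add_assoc, smul_single, smul_eq_mul, mul_one, ← diagonal_single]
  exact congrArg (K + ·) (diagonal_add _ _).symm

variable [Fintype n]

theorem mul_single_mul_apply (G H : Matrix n n R) (k a b : n) :
    (G * single k k (1 : R) * H) a b = G a k * H k b := by
  rw [Matrix.mul_assoc, mul_apply]
  simp [mul_apply, single_apply, ite_and]

theorem det_add_smul_single (N : Matrix n n R) (k : n) (t : R) :
    (N + t • single k k 1).det = N.det + t * N.adjugate k k := by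
  have hrow : N + t • single k k 1 = N.updateRow k (N k + t • Pi.single k 1) := by
    ext a b
    rcases eq_or_ne a k with rfl | hak
    · simp [Pi.single_apply, single_apply, eq_comm]
    · simp [hak, Ne.symm hak]
  rw [hrow, det_updateRow_add, det_updateRow_smul, updateRow_eq_self, adjugate_apply]

theorem det_mul_mul_add_one (M D : Matrix n n R) (hM : IsUnit M) :
    (D * M * D + 1).det = M.det * (M⁻¹ + D * D).det := by
  rw [← det_mul, Matrix.mul_add, mul_nonsing_inv _ ((isUnit_iff_isUnit_det M).mp hM), add_comm,
    Matrix.mul_assoc, det_one_add_mul_comm, Matrix.mul_assoc]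

theorem mul_inv_mul_add_one_mul (M D : Matrix n n R) (hM : IsUnit M)
    (hN : IsUnit (M⁻¹ + D * D)) :
    D * (D * M * D + 1)⁻¹ * D = M⁻¹ - M⁻¹ * (M⁻¹ + D * D)⁻¹ * M⁻¹ := by
  rw [add_comm, add_mul_mul_inv_eq_sub 1 D M D isUnit_one hM (by simpa using hN)]
  simp only [inv_one, Matrix.mul_one, Matrix.one_mul, Matrix.mul_sub, Matrix.sub_mul,
    ← Matrix.mul_assoc]
  set N := M⁻¹ + D * D
  have hNN : N * N⁻¹ = 1 := mul_nonsing_inv _ ((isUnit_iff_isUnit_det N).mp hN)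
  have hN1 : N⁻¹ * N = 1 := nonsing_inv_mul _ ((isUnit_iff_isUnit_det N).mp hN)
  rw [Matrix.mul_assoc (D * D * N⁻¹), show D * D = N - M⁻¹ by simp [N]]
  simp only [Matrix.mul_sub, Matrix.sub_mul, hNN, hN1, Matrix.mul_assoc, Matrix.mul_one,
    Matrix.one_mul]
  abel

end CommRing

variable {n : Type*} [Fintype n] [DecidableEq n]

theorem PosDef.inv_add_diagonal {M : Matrix n n ℝ} (hM : M.PosDef) {v : n → ℝ}
    (hv : ∀ i, 0 ≤ v i) : (M⁻¹ + diagonal v).PosDef :=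
  hM.inv.add_posSemidef (posSemidef_diagonal_iff.mpr hv)

theorem PosDef.transpose_mul_inv_mul {m : Type*} [Fintype m] [DecidableEq m] {A : Matrix m n ℝ}
    {S : Matrix m m ℝ} (hS : S.PosDef) (hM : IsUnit (Aᵀ * S⁻¹ * A)) : (Aᵀ * S⁻¹ * A).PosDef :=
  (PosSemidef.posDef_iff_isUnit (by simpa using hS.inv.posSemidef.conjTranspose_mul_mul_same A)).2 hM

theorem hasDerivAt_det_add_diagonal_update (K : Matrix n n ℝ) (v : n → ℝ) (k : n) :
    HasDerivAt (fun s => (K + diagonal (Function.update v k s)).det)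
      ((K + diagonal v).adjugate k k) (v k) := by
  simp only [add_diagonal_update, det_add_smul_single]
  simpa using ((hasDerivAt_id (v k)).sub_const (v k)).mul_const ((K + diagonal v).adjugate k k)
    |>.const_add (K + diagonal v).det

theorem hasDerivAt_log_det_add_diagonal_update {K : Matrix n n ℝ} {v : n → ℝ}
    (h : (K + diagonal v).det ≠ 0) (k : n) :
    HasDerivAt (fun s => Real.log (K + diagonal (Function.update v k s)).det)
      ((K + diagonal v)⁻¹ k k) (v k) := by
  convert (hasDerivAt_det_add_diagonal_update K v k).log (by simpa using h) using 1
  rw [Function.update_eq_self, inv_def, smul_apply, smul_eq_mul, Ring.inverse_eq_inv',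
    div_eq_inv_mul]

open scoped Norms.Operator in
theorem hasDerivAt_inv_add_diagonal_update_apply {K : Matrix n n ℝ} {v : n → ℝ}
    (h : IsUnit (K + diagonal v)) (k a b : n) :
    HasDerivAt (fun s => (K + diagonal (Function.update v k s))⁻¹ a b)
      (-((K + diagonal v)⁻¹ a k * (K + diagonal v)⁻¹ k b)) (v k) := by
  set N := K + diagonal v
  have hline : HasDerivAt (fun s => N + (s - v k) • single k k (1 : ℝ)) (single k k 1) (v k) :=
    ((((hasDerivAt_id (v k)).sub_const (v k)).smul_const (single k k (1 : ℝ))).const_add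
      N).congr_deriv (one_smul _ _)
  have hinv : HasFDerivAt Ring.inverse
      (-ContinuousLinearMap.mulLeftRight ℝ _ (Ring.inverse N) (Ring.inverse N))
      (N + (v k - v k) • single k k 1) := by
    simpa [← Ring.inverse_unit h.unit] using hasFDerivAt_ringInverse (𝕜 := ℝ) h.unit
  have hentry := (entryLinearMap ℝ ℝ a b).toContinuousLinearMap.hasFDerivAt.comp_hasDerivAt (v k)
    (hinv.comp_hasDerivAt (v k) hline)
  simp only [add_diagonal_update, nonsing_inv_eq_ringInverse]
  refine hentry.congr_deriv ?_
  change (-(Ring.inverse N * single k k 1 * Ring.inverse N : Matrix n n ℝ)) a b = _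
  rw [neg_apply, mul_single_mul_apply]

theorem hasDerivAt_inv_add_diagonal_update_mulVec_apply {K : Matrix n n ℝ} {v : n → ℝ}
    (h : IsUnit (K + diagonal v)) (c : n → ℝ) (k a : n) :
    HasDerivAt (fun s => ((K + diagonal (Function.update v k s))⁻¹ *ᵥ c) a)
      (-((K + diagonal v)⁻¹ a k * ((K + diagonal v)⁻¹ *ᵥ c) k)) (v k) := by
  simp only [mulVec, dotProduct]
  refine (HasDerivAt.fun_sum fun b _ =>
    (hasDerivAt_inv_add_diagonal_update_apply h k a b).mul_const (c b)).congr_deriv ?_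
  simp only [Finset.mul_sum, ← Finset.sum_neg_distrib, neg_mul, mul_assoc]

theorem hasDerivAt_dotProduct_inv_add_diagonal_update_mulVec {K : Matrix n n ℝ} {v : n → ℝ}
    (h : IsUnit (K + diagonal v)) (c c' : n → ℝ) (k : n) :
    HasDerivAt (fun s => c ⬝ᵥ (K + diagonal (Function.update v k s))⁻¹ *ᵥ c')
      (-((c ᵥ* (K + diagonal v)⁻¹) k * ((K + diagonal v)⁻¹ *ᵥ c') k)) (v k) := by
  simp only [dotProduct]
  refine (HasDerivAt.fun_sum fun a _ =>
    (hasDerivAt_inv_add_diagonal_update_mulVec_apply h c' k a).const_mul (c a)).congr_deriv ?_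
  simp only [vecMul, dotProduct, Finset.sum_mul, ← Finset.sum_neg_distrib, mul_neg, mul_assoc]

end Matrix

section LogMixPosterior

variable {d m : ℕ} {A : Matrix (Fin m) (Fin d) ℝ} {Sobs : Matrix (Fin m) (Fin m) ℝ}

theorem logMixPosterior_eq_of_nonneg (hSobs : Sobs.PosDef) (hM : IsUnit (Aᵀ * Sobs⁻¹ * A))
    (lam : Fin d → ℝ) (y : Fin m → ℝ) {v : Fin d → ℝ} (hv : ∀ i, 0 ≤ v i) :
    logMixPosterior A Sobs lam y v =
      -(∑ i, lam i * v i) - (1 / 2) * Real.log (Aᵀ * Sobs⁻¹ * A).det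
        - (1 / 2) * Real.log ((Aᵀ * Sobs⁻¹ * A)⁻¹ + diagonal v).det
        + (1 / 2) * (y ⬝ᵥ (Sobs⁻¹ * A * (Aᵀ * Sobs⁻¹ * A)⁻¹ * Aᵀ * Sobs⁻¹) *ᵥ y)
        - (1 / 2) * ((((Aᵀ * Sobs⁻¹ * A)⁻¹ * Aᵀ * Sobs⁻¹) *ᵥ y) ⬝ᵥ
            ((Aᵀ * Sobs⁻¹ * A)⁻¹ + diagonal v)⁻¹ *ᵥ (((Aᵀ * Sobs⁻¹ * A)⁻¹ * Aᵀ * Sobs⁻¹) *ᵥ y)) := by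
  set M := Aᵀ * Sobs⁻¹ * A
  set D := diagonal fun i => √(v i)
  set B := M⁻¹ * Aᵀ * Sobs⁻¹
  have hMpd : M.PosDef := hSobs.transpose_mul_inv_mul hM
  have hNpd : (M⁻¹ + diagonal v).PosDef := hMpd.inv_add_diagonal hv
  have hD : D * D = diagonal v := by
    rw [diagonal_mul_diagonal]; congr 1; ext i; exact Real.mul_self_sqrt (hv i)
  have hBT : Bᵀ = Sobs⁻¹ * A * M⁻¹ := by
    simp only [B, transpose_mul, transpose_transpose,
      (isHermitian_iff_isSymm.mp hSobs.inv.isHermitian).eq,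
      (isHermitian_iff_isSymm.mp hMpd.inv.isHermitian).eq, Matrix.mul_assoc]
  have hquad : Sobs⁻¹ * A * D * (D * M * D + 1)⁻¹ * D * Aᵀ * Sobs⁻¹
      = Sobs⁻¹ * A * M⁻¹ * Aᵀ * Sobs⁻¹ - Bᵀ * (M⁻¹ + diagonal v)⁻¹ * B := calc
    _ = Sobs⁻¹ * A * (D * (D * M * D + 1)⁻¹ * D) * (Aᵀ * Sobs⁻¹) := by
      simp only [Matrix.mul_assoc]
    _ = Sobs⁻¹ * A * (M⁻¹ - M⁻¹ * (M⁻¹ + diagonal v)⁻¹ * M⁻¹) * (Aᵀ * Sobs⁻¹) := by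
      rw [mul_inv_mul_add_one_mul M D hM (hD ▸ hNpd.isUnit), hD]
    _ = _ := by
      rw [hBT]; simp only [B, Matrix.mul_sub, Matrix.sub_mul, Matrix.mul_assoc]
  have hdot : y ⬝ᵥ (Bᵀ * (M⁻¹ + diagonal v)⁻¹ * B) *ᵥ y
      = (B *ᵥ y) ⬝ᵥ (M⁻¹ + diagonal v)⁻¹ *ᵥ (B *ᵥ y) := by
    rw [← mulVec_mulVec, ← mulVec_mulVec, dotProduct_mulVec, vecMul_transpose]
  rw [logMixPosterior, det_mul_mul_add_one M D hM, hD,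
    Real.log_mul hMpd.det_pos.ne' hNpd.det_pos.ne', hquad, sub_mulVec, dotProduct_sub, hdot]
  ring

theorem hasDerivAt_logMixPosterior_update (hSobs : Sobs.PosDef) (hM : IsUnit (Aᵀ * Sobs⁻¹ * A))
    (lam : Fin d → ℝ) (y : Fin m → ℝ) {v : Fin d → ℝ} (hv : ∀ i, 0 < v i) (j : Fin d) :
    HasDerivAt (fun s => logMixPosterior A Sobs lam y (Function.update v j s))
      (-lam j - (1 / 2) * ((Aᵀ * Sobs⁻¹ * A)⁻¹ + diagonal v)⁻¹ j j
        + (1 / 2) * ((((Aᵀ * Sobs⁻¹ * A)⁻¹ + diagonal v)⁻¹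
            *ᵥ (((Aᵀ * Sobs⁻¹ * A)⁻¹ * Aᵀ * Sobs⁻¹) *ᵥ y)) j) ^ 2) (v j) := by
  set M := Aᵀ * Sobs⁻¹ * A
  set c := (M⁻¹ * Aᵀ * Sobs⁻¹) *ᵥ y
  have hNpd := (hSobs.transpose_mul_inv_mul hM).inv_add_diagonal fun i => (hv i).le
  have hlin : HasDerivAt (fun s => ∑ i, lam i * Function.update v j s i) (lam j) (v j) := by
    refine (HasDerivAt.fun_sum fun i _ =>
      (hasDerivAt_pi.mp (hasDerivAt_update v j (v j)) i).const_mul (lam i)).congr_deriv ?_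
    simp [Pi.single_apply]
  have hclosed := ((((hlin.neg.sub_const ((1 / 2) * Real.log M.det)).sub
    ((hasDerivAt_log_det_add_diagonal_update hNpd.det_pos.ne' j).const_mul (1 / 2))).add_const
      ((1 / 2) * (y ⬝ᵥ (Sobs⁻¹ * A * M⁻¹ * Aᵀ * Sobs⁻¹) *ᵥ y))).sub
    ((hasDerivAt_dotProduct_inv_add_diagonal_update_mulVec hNpd.isUnit c c j).const_mul (1 / 2)))
  refine hclosed.congr_of_eventuallyEq ?_ |>.congr_deriv ?_
  · filter_upwards [eventually_gt_nhds (hv j)] with s hs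
    exact logMixPosterior_eq_of_nonneg hSobs hM lam y
      ((Function.forall_update_iff v (p := fun _ x => 0 ≤ x)).2 ⟨hs.le, fun i _ => (hv i).le⟩)
  · rw [← vecMul_transpose, (isHermitian_iff_isSymm.mp hNpd.inv.isHermitian).eq]
    ring

end LogMixPosterior

theorem hessian_log_posterior_mixing_general
    (d m : ℕ)
    (A : Matrix (Fin m) (Fin d) ℝ)
    (Sobs : Matrix (Fin m) (Fin m) ℝ) (hSobs : Sobs.PosDef)
    (y : Fin m → ℝ)
    (hM : IsUnit (Aᵀ * Sobs⁻¹ * A))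
    (lam : Fin d → ℝ) :
    ∀ w : Fin d → ℝ, (∀ i, 0 < w i) → ∀ i j : Fin d,
      HasDerivAt
        (fun t : ℝ =>
          -- the `j`-th partial derivative of `F` at `Function.update w i t`
          deriv (fun s : ℝ =>
              logMixPosterior A Sobs lam y (Function.update (Function.update w i t) j s))
            (Function.update w i t j))
        ((1 / 2) * (((Aᵀ * Sobs⁻¹ * A)⁻¹ + Matrix.diagonal w)⁻¹ i j) ^ 2
          - (((Aᵀ * Sobs⁻¹ * A)⁻¹ + Matrix.diagonal w)⁻¹
                * (Aᵀ * Sobs⁻¹ * A)⁻¹ * Aᵀ * Sobs⁻¹).mulVec y i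
            * (((Aᵀ * Sobs⁻¹ * A)⁻¹ + Matrix.diagonal w)⁻¹ i j)
            * (((Aᵀ * Sobs⁻¹ * A)⁻¹ + Matrix.diagonal w)⁻¹
                * (Aᵀ * Sobs⁻¹ * A)⁻¹ * Aᵀ * Sobs⁻¹).mulVec y j)
        (w i) := by
  intro w hw i j
  set M := Aᵀ * Sobs⁻¹ * A
  set c := (M⁻¹ * Aᵀ * Sobs⁻¹) *ᵥ y
  have hNpd := (hSobs.transpose_mul_inv_mul hM).inv_add_diagonal fun i => (hw i).le
  have hz : ((M⁻¹ + diagonal w)⁻¹ * M⁻¹ * Aᵀ * Sobs⁻¹) *ᵥ y = (M⁻¹ + diagonal w)⁻¹ *ᵥ c := by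
    simp only [c, mulVec_mulVec, Matrix.mul_assoc]
  have hpartial : (fun t => -lam j - (1 / 2) * (M⁻¹ + diagonal (Function.update w i t))⁻¹ j j
      + (1 / 2) * (((M⁻¹ + diagonal (Function.update w i t))⁻¹ *ᵥ c) j) ^ 2)
      =ᶠ[nhds (w i)] fun t => deriv (fun s =>
        logMixPosterior A Sobs lam y (Function.update (Function.update w i t) j s))
          (Function.update w i t j) := by
    filter_upwards [eventually_gt_nhds (hw i)] with t ht
    exact ((hasDerivAt_logMixPosterior_update hSobs hM lam y
      ((Function.forall_update_iff w (p := fun _ x => 0 < x)).2 ⟨ht, fun k _ => hw k⟩) j).deriv).symm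
  refine (((hasDerivAt_const _ (-lam j)).sub
    ((hasDerivAt_inv_add_diagonal_update_apply hNpd.isUnit i j j).const_mul (1 / 2))).add
      (((hasDerivAt_inv_add_diagonal_update_mulVec_apply hNpd.isUnit c i j).pow 2).const_mul
        (1 / 2))).congr_of_eventuallyEq hpartial.symm |>.congr_deriv ?_
  rw [hz, (isHermitian_iff_isSymm.mp hNpd.inv.isHermitian).apply i j]
  simp only [Function.update_eq_self]
  ring

/-- Hessian formula (appendix C.1) of the log posterior mixing density: on the
positive orthant, the second partial derivative `∂²F/∂wᵢ∂w_j` exists and equals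
`½ ([(M⁻¹ + Λ_w)⁻¹]ᵢⱼ)² − zᵢ [(M⁻¹ + Λ_w)⁻¹]ᵢⱼ z_j`
with `z = (M⁻¹ + Λ_w)⁻¹ M⁻¹ AᵀΣ_obs⁻¹ y`; i.e., the Hessian is
`½ ((M⁻¹+Λ_w)⁻¹)^{⊙2} − Λ_z (M⁻¹+Λ_w)⁻¹ Λ_z`. -/
theorem hessian_log_posterior_mixing
    (d m : ℕ) (hd : 0 < d) (hm : 0 < m)
    (A : Matrix (Fin m) (Fin d) ℝ)
    (Sobs : Matrix (Fin m) (Fin m) ℝ) (hSobs : Sobs.PosDef)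
    (y : Fin m → ℝ)
    (hM : IsUnit (Aᵀ * Sobs⁻¹ * A))
    (lam : Fin d → ℝ) (hlam : ∀ i, 0 < lam i) :
    ∀ w : Fin d → ℝ, (∀ i, 0 < w i) → ∀ i j : Fin d,
      HasDerivAt
        (fun t : ℝ =>
          -- the `j`-th partial derivative of `F` at `Function.update w i t`
          deriv (fun s : ℝ =>
              logMixPosterior A Sobs lam y (Function.update (Function.update w i t) j s))
            (Function.update w i t j))
        ((1 / 2) * (((Aᵀ * Sobs⁻¹ * A)⁻¹ + Matrix.diagonal w)⁻¹ i j) ^ 2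
          - (((Aᵀ * Sobs⁻¹ * A)⁻¹ + Matrix.diagonal w)⁻¹
                * (Aᵀ * Sobs⁻¹ * A)⁻¹ * Aᵀ * Sobs⁻¹).mulVec y i
            * (((Aᵀ * Sobs⁻¹ * A)⁻¹ + Matrix.diagonal w)⁻¹ i j)
            * (((Aᵀ * Sobs⁻¹ * A)⁻¹ + Matrix.diagonal w)⁻¹
                * (Aᵀ * Sobs⁻¹ * A)⁻¹ * Aᵀ * Sobs⁻¹).mulVec y j)
        (w i) :=
  hessian_log_posterior_mixing_general d m A Sobs hSobs y hM lam
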